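/- Let L¹_Δ and L²_Δ be operators on a normed space depending on a parameter Δ > 0 such that: (1) there exists a unique U* with L²_Δ(U*) = 0; (2) there exists α₁ > 0 independent of Δ with α₁‖U − V‖ ≤ ‖L¹_Δ(U) − L¹_Δ(V)‖ for all U, V; (3) there exists α₂ > 0 independent of Δ with ‖(L¹_Δ(U) − L²_Δ(U)) − (L¹_Δ(V) − L²_Δ(V))‖ ≤ α₂Δ‖U − V‖ for all U, V. If for each r the iterate U^(r+1) is defined by L¹_Δ(U^(r+1)) = L¹_Δ(U^(r)) − L²_Δ(U^(r)), then ‖U^(r) − U*‖ ≤ ν^r ‖U^(0) − U*‖ where ν = (α₂/α₁)Δ; in particular if ν < 1 the iteration converges to U*. -/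
import Mathlib

open Filter

theorem dec_convergence {E : Type*} [NormedAddCommGroup E] [NormedSpace ℝ E]
    (Δ : ℝ) (hΔ : 0 < Δ) (L1 L2 : E → E) (Ustar : E)
    (hstar : L2 Ustar = 0) (huniq : ∀ V, L2 V = 0 → V = Ustar)
    (α₁ α₂ : ℝ) (hα₁ : 0 < α₁) (hα₂ : 0 < α₂)
    (hcoerc : ∀ U V : E, α₁ * ‖U - V‖ ≤ ‖L1 U - L1 V‖)
    (hlip : ∀ U V : E, ‖(L1 U - L2 U) - (L1 V - L2 V)‖ ≤ α₂ * Δ * ‖U - V‖)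
    (U : ℕ → E) (hiter : ∀ r : ℕ, L1 (U (r + 1)) = L1 (U r) - L2 (U r)) :
    (∀ r : ℕ, ‖U r - Ustar‖ ≤ (α₂ / α₁ * Δ) ^ r * ‖U 0 - Ustar‖) ∧
      (α₂ / α₁ * Δ < 1 → Tendsto U atTop (nhds Ustar)) := by
  have hν : 0 ≤ α₂ / α₁ * Δ := by positivity
  have key : ∀ r : ℕ, ‖U (r + 1) - Ustar‖ ≤ (α₂ / α₁ * Δ) * ‖U r - Ustar‖ := by
    intro r
    have h1 : α₁ * ‖U (r + 1) - Ustar‖ ≤ ‖L1 (U (r + 1)) - L1 Ustar‖ := hcoerc _ _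
    have h2 : L1 (U (r + 1)) - L1 Ustar
        = (L1 (U r) - L2 (U r)) - (L1 Ustar - L2 Ustar) := by
      rw [hiter r, hstar]; abel
    have h3 : α₁ * ‖U (r + 1) - Ustar‖ ≤ α₂ * Δ * ‖U r - Ustar‖ := by
      calc α₁ * ‖U (r + 1) - Ustar‖ ≤ ‖L1 (U (r + 1)) - L1 Ustar‖ := h1
        _ = ‖(L1 (U r) - L2 (U r)) - (L1 Ustar - L2 Ustar)‖ := by rw [h2]
        _ ≤ α₂ * Δ * ‖U r - Ustar‖ := hlip _ _
    have h4 : ‖U (r + 1) - Ustar‖ ≤ α₂ * Δ * ‖U r - Ustar‖ / α₁ :=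
      (le_div_iff₀' hα₁).mpr h3
    calc ‖U (r + 1) - Ustar‖ ≤ α₂ * Δ * ‖U r - Ustar‖ / α₁ := h4
      _ = α₂ / α₁ * Δ * ‖U r - Ustar‖ := by ring
  have bound : ∀ r : ℕ, ‖U r - Ustar‖ ≤ (α₂ / α₁ * Δ) ^ r * ‖U 0 - Ustar‖ := by
    intro r
    induction r with
    | zero => simp
    | succ n ih =>
      calc ‖U (n + 1) - Ustar‖ ≤ (α₂ / α₁ * Δ) * ‖U n - Ustar‖ := key n
        _ ≤ (α₂ / α₁ * Δ) * ((α₂ / α₁ * Δ) ^ n * ‖U 0 - Ustar‖) := by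
            exact mul_le_mul_of_nonneg_left ih hν
        _ = (α₂ / α₁ * Δ) ^ (n + 1) * ‖U 0 - Ustar‖ := by ring
  refine ⟨bound, fun hlt => ?_⟩
  have htend : Tendsto (fun r => (α₂ / α₁ * Δ) ^ r * ‖U 0 - Ustar‖) atTop (nhds 0) := by
    have := tendsto_pow_atTop_nhds_zero_of_lt_one hν hlt
    simpa using this.mul_const ‖U 0 - Ustar‖
  have : Tendsto (fun r => ‖U r - Ustar‖) atTop (nhds 0) :=
    squeeze_zero (fun r => norm_nonneg _) bound htend
  have := tendsto_iff_norm_sub_tendsto_zero.mpr this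
  simpa using this
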